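/- arXiv:2507.07138 — 3 statements merged into one kernel-verified Lean document; each statement's English description precedes it below -/
import Mathlib

section
/- Pure GNNs suffer from the automorphic node problem: let G be a simple graph with features X^0, let node representations x_v^L be computed by L layers of message passing, and let a link representation be defined as x_{(u,v)} = g(x_u^L, x_v^L) for some function g. If there exist automorphisms σ₁ and σ₂ of G fixing the feature map (X^0 ∘ σᵢ = X^0) with σ₁(u) = u' and σ₂(v) = v', then x_{(u,v)} = x_{(u',v')}, regardless of whether the links (u, v) and (u', v') are automorphic. -/
open Classical in
/-- The multiset of neighbors of a vertex. -/
noncomputable def nbhd {V : Type*} [Fintype V] (G : SimpleGraph V) (v : V) :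
    Multiset V :=
  (Finset.univ.filter fun u => G.Adj v u).val

/-- Message passing: `x_v^0 = feat v` and
`x_v^{l+1} = upd (x_v^l) (agg {{x_u^l : u ∈ N(v)}})`. -/
noncomputable def mp {V X Y : Type*} [Fintype V] (G : SimpleGraph V)
    (feat : V → X) (agg : Multiset X → Y) (upd : X → Y → X) : ℕ → V → X
  | 0 => feat
  | (l + 1) => fun v =>
      upd (mp G feat agg upd l v) (agg ((nbhd G v).map (mp G feat agg upd l)))

lemma nbhd_map {V : Type*} [Fintype V] (G : SimpleGraph V) (σ : G ≃g G) (v : V) :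
    nbhd G (σ v) = (nbhd G v).map σ := by
  classical
  unfold nbhd
  have : (Finset.filter (fun u => G.Adj (σ v) u) Finset.univ)
      = (Finset.filter (fun u => G.Adj v u) Finset.univ).map ⟨σ, σ.injective⟩ := by
    ext w
    simp only [Finset.mem_map, Finset.mem_filter, Finset.mem_univ, true_and,
      Function.Embedding.coeFn_mk]
    constructor
    · intro h
      refine ⟨σ.symm w, ?_, by simp⟩
      have := σ.symm.map_adj_iff.mpr h
      simpa using this
    · rintro ⟨a, ha, rfl⟩
      exact σ.map_adj_iff.mpr ha
  rw [this, Finset.map_val]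
  rfl

lemma mp_equivariant {V X Y : Type*} [Fintype V] (G : SimpleGraph V)
    (feat : V → X) (agg : Multiset X → Y) (upd : X → Y → X)
    (σ : G ≃g G) (hfeat : ∀ w : V, feat (σ w) = feat w) :
    ∀ L w, mp G feat agg upd L (σ w) = mp G feat agg upd L w := by
  intro L
  induction L with
  | zero => exact hfeat
  | succ l ih =>
    intro w
    simp only [mp, nbhd_map G σ w, Multiset.map_map, ih]
    congr 1
    congr 1
    exact Multiset.map_congr rfl fun a _ => ih a

/-- Pure GNNs suffer from the automorphic node problem: if feature-preserving
automorphisms `σ₁, σ₂` satisfy `σ₁ u = u'` and `σ₂ v = v'`, then the pure-GNN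
link representations `g (x_u^L) (x_v^L)` and `g (x_{u'}^L) (x_{v'}^L)` coincide,
regardless of whether the links `(u,v)` and `(u',v')` are automorphic. -/
theorem pure_gnn_automorphic_node_problem {V X Y Z : Type*} [Fintype V]
    (G : SimpleGraph V) (feat : V → X) (agg : Multiset X → Y) (upd : X → Y → X)
    (g : X → X → Z) (L : ℕ) (u v u' v' : V)
    (σ₁ σ₂ : G ≃g G)
    (hfeat₁ : ∀ w : V, feat (σ₁ w) = feat w)
    (hfeat₂ : ∀ w : V, feat (σ₂ w) = feat w)
    (hu : σ₁ u = u') (hv : σ₂ v = v') :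
    g (mp G feat agg upd L u) (mp G feat agg upd L v)
      = g (mp G feat agg upd L u') (mp G feat agg upd L v') := by
  rw [← hu, ← hv, mp_equivariant G feat agg upd σ₁ hfeat₁,
    mp_equivariant G feat agg upd σ₂ hfeat₂]
end

section
/- There exists a simple graph G and vertex pairs (u, v) and (u', v') such that u = u', some automorphism of G maps v to v', the links (u, v) and (u', v') are not automorphic, and d_G(u, v) ≠ d_G(u', v'). Consequently, a link representation that includes the shortest path length distinguishes two links that any pure GNN (whose link representation depends only on the endpoint representations computed by message passing from constant features) must identify. -/
section MessagePassing

variable {V W X Y : Type*} [Fintype V] [Fintype W] {G : SimpleGraph V} {G' : SimpleGraph W}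

theorem mem_nbhd {v w : V} : w ∈ nbhd G v ↔ G.Adj v w := by
  simp [nbhd]

theorem nodup_nbhd (v : V) : (nbhd G v).Nodup :=
  Finset.nodup _

theorem nbhd_iso_apply (σ : G ≃g G') (v : V) : nbhd G' (σ v) = (nbhd G v).map σ := by
  refine ((nodup_nbhd _).ext ((nodup_nbhd v).map σ.injective)).mpr fun w => ?_
  obtain ⟨a, rfl⟩ := σ.surjective w
  rw [mem_nbhd, Multiset.mem_map_of_injective σ.injective, mem_nbhd, σ.map_adj_iff]

theorem mp_iso_apply (σ : G ≃g G') {feat : V → X} {feat' : W → X}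
    (hfeat : ∀ v, feat' (σ v) = feat v) (agg : Multiset X → Y) (upd : X → Y → X) (L : ℕ)
    (v : V) : mp G' feat' agg upd L (σ v) = mp G feat agg upd L v := by
  induction L generalizing v with
  | zero => exact hfeat v
  | succ L ih => simp only [mp, ih, nbhd_iso_apply, Multiset.map_map, Function.comp_def]

end MessagePassing

namespace SimpleGraph

variable {V W : Type*} {G : SimpleGraph V} {G' : SimpleGraph W}

theorem edist_map_le (f : G →g G') (u v : V) : G'.edist (f u) (f v) ≤ G.edist u v := by
  by_cases h : G.Reachable u v
  · obtain ⟨p, hp⟩ := h.exists_walk_length_eq_edist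
    rw [← hp]
    simpa using edist_le (p.map f)
  · simp [edist_eq_top_of_not_reachable h]

theorem Iso.edist_eq (σ : G ≃g G') (u v : V) : G'.edist (σ u) (σ v) = G.edist u v :=
  le_antisymm (edist_map_le σ.toHom u v) <| by
    simpa using edist_map_le σ.symm.toHom (σ u) (σ v)

theorem Iso.dist_eq (σ : G ≃g G') (u v : V) : G'.dist (σ u) (σ v) = G.dist u v := by
  rw [dist, dist, σ.edist_eq]

theorem dist_eq_of_image_pair_eq (σ : G ≃g G) {u v u' v' : V}
    (h : (fun x => σ x) '' {u, v} = {u', v'}) : G.dist u v = G.dist u' v' := by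
  rw [Set.image_pair, Set.pair_eq_pair_iff] at h
  obtain ⟨rfl, rfl⟩ | ⟨rfl, rfl⟩ := h
  · exact (σ.dist_eq u v).symm
  · rw [dist_comm, σ.dist_eq]

def cycleGraph.rotation {n : ℕ} [NeZero n] (k : Fin n) : cycleGraph n ≃g cycleGraph n where
  toEquiv := Equiv.addRight k
  map_rel_iff' := by
    intro a b
    rw [Equiv.coe_addRight, cycleGraph_adj', cycleGraph_adj', add_sub_add_right_eq_sub,
      add_sub_add_right_eq_sub]

theorem cycleGraph_six_edist_zero_two : (cycleGraph 6).edist 0 2 = 2 :=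
  edist_eq_two_iff.mpr ⟨by decide, by decide, ⟨1, by rw [mem_commonNeighbors]; decide⟩⟩

theorem cycleGraph_six_edist_zero_three : (cycleGraph 6).edist 0 3 = 3 := by
  refine le_antisymm ?_ (Order.add_one_le_of_lt (two_lt_edist_iff.mpr ⟨by decide, by decide, ?_⟩))
  · calc (cycleGraph 6).edist 0 3 ≤ (cycleGraph 6).edist 0 2 + (cycleGraph 6).edist 2 3 :=
          SimpleGraph.edist_triangle
      _ = 3 := by rw [cycleGraph_six_edist_zero_two, edist_eq_one_iff_adj.mpr (by decide)]; rfl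
  · refine Set.eq_empty_of_forall_notMem fun w => ?_
    simp only [mem_commonNeighbors]
    revert w
    decide

theorem cycleGraph_six_dist_zero_two_ne_dist_zero_three :
    (cycleGraph 6).dist 0 2 ≠ (cycleGraph 6).dist 0 3 := by
  rw [dist, dist, cycleGraph_six_edist_zero_two, cycleGraph_six_edist_zero_three]
  decide

end SimpleGraph

/-- There is a finite simple graph `G` and vertex pairs `(u,v)`, `(u',v')` with
`u = u'`, some automorphism mapping `v` to `v'`, whose links are not automorphic
and which have different shortest path distances; consequently the shortest path
length distinguishes two links that every pure GNN (link representation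
`g (x_u^L) (x_v^L)` computed by message passing from constant features) must
identify. -/
theorem exists_links_distinguished_by_sp_not_by_pure_gnn :
    ∃ (n : ℕ) (G : SimpleGraph (Fin n)) (u v u' v' : Fin n),
      u = u' ∧
      (∃ σ : G ≃g G, σ v = v') ∧
      (¬ ∃ σ : G ≃g G, (fun x => σ x) '' {u, v} = {u', v'}) ∧
      G.dist u v ≠ G.dist u' v' ∧
      (∀ (X Y Z : Type) (c : X) (agg : Multiset X → Y) (upd : X → Y → X)
          (g : X → X → Z) (L : ℕ),
        g (mp G (fun _ => c) agg upd L u) (mp G (fun _ => c) agg upd L v)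
          = g (mp G (fun _ => c) agg upd L u') (mp G (fun _ => c) agg upd L v')) := by
  let σ := SimpleGraph.cycleGraph.rotation (n := 6) 1
  have hdist := SimpleGraph.cycleGraph_six_dist_zero_two_ne_dist_zero_three
  refine ⟨6, SimpleGraph.cycleGraph 6, 0, 2, 0, 3, rfl, ⟨σ, rfl⟩,
    fun ⟨τ, hτ⟩ => hdist (SimpleGraph.dist_eq_of_image_pair_eq τ hτ), hdist, ?_⟩
  intro X Y Z c agg upd g L
  rw [show (3 : Fin 6) = σ 2 from rfl, mp_iso_apply σ (fun _ => rfl)]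
end

section
/- In the cycle graph C_6 on vertices {0, 1, 2, 3, 4, 5}, the links (0, 2) and (0, 3) satisfy: the graph is vertex-transitive (every vertex is automorphic to every other), every pure-GNN link representation computed from constant initial features assigns (0,2) and (0,3) the same representation, yet d(0, 2) = 2 ≠ 3 = d(0, 3), so the links are not automorphic. -/
/-- The cycle graph `C₆` on `ZMod 6`: `i` and `j` are adjacent iff they differ
by `1` (mod 6). -/
def C6 : SimpleGraph (ZMod 6) := SimpleGraph.fromRel (fun i j => j = i + 1)

lemma c6_adj_iff (v u : ZMod 6) : C6.Adj v u ↔ u = v - 1 ∨ u = v + 1 := by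
  constructor
  · rintro ⟨hne, h | h⟩
    · right; exact h
    · left; rw [h]; ring
  · rintro (rfl | rfl)
    · refine ⟨?_, Or.inr (by ring)⟩
      intro h
      exact absurd (sub_eq_self.mp h.symm) (by decide)
    · refine ⟨?_, Or.inl rfl⟩
      intro h
      exact absurd (left_eq_add.mp h) (by decide)

lemma nbhd_card (v : ZMod 6) : Multiset.card (nbhd C6 v) = 2 := by
  classical
  have h : (Finset.univ.filter fun u => C6.Adj v u) = {v - 1, v + 1} := by
    ext u
    simp only [Finset.mem_filter, Finset.mem_univ, true_and, Finset.mem_insert,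
      Finset.mem_singleton, c6_adj_iff]
  have hne : v - 1 ≠ v + 1 := by
    intro h
    have h2 : (2 : ZMod 6) = 0 := by linear_combination -h
    exact absurd h2 (by decide)
  have : (nbhd C6 v) = ({v - 1, v + 1} : Finset (ZMod 6)).val := by
    unfold nbhd
    congr 1
  rw [this]
  show ({v - 1, v + 1} : Finset (ZMod 6)).card = 2
  rw [Finset.card_insert_of_notMem (by simpa using hne), Finset.card_singleton]

lemma mp_const {X Y : Type} (c : X) (agg : Multiset X → Y) (upd : X → Y → X) :
    ∀ L, ∀ v w : ZMod 6, mp C6 (fun _ => c) agg upd L v = mp C6 (fun _ => c) agg upd L w := by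
  intro L
  induction L with
  | zero => intro v w; rfl
  | succ l ih =>
    intro v w
    have key : ∀ u : ZMod 6, (nbhd C6 u).map (mp C6 (fun _ => c) agg upd l)
        = Multiset.replicate 2 (mp C6 (fun _ => c) agg upd l 0) := by
      intro u
      rw [Multiset.map_congr rfl (fun x _ => ih x 0), Multiset.map_const', nbhd_card]
    show upd _ _ = upd _ _
    rw [ih v w, key v, key w]

def c6walk03 : C6.Walk 0 3 :=
  .cons ((c6_adj_iff 0 1).mpr (Or.inr (by decide)))
    (.cons ((c6_adj_iff 1 2).mpr (Or.inr (by decide)))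
      (.cons ((c6_adj_iff 2 3).mpr (Or.inr (by decide))) .nil))

def c6walk02 : C6.Walk 0 2 :=
  .cons ((c6_adj_iff 0 1).mpr (Or.inr (by decide)))
    (.cons ((c6_adj_iff 1 2).mpr (Or.inr (by decide))) .nil)

lemma c6_dist02 : C6.dist 0 2 = 2 := by
  have hle : C6.dist 0 2 ≤ 2 := by
    have := SimpleGraph.dist_le c6walk02
    simpa [c6walk02] using this
  have h0 : C6.dist 0 2 ≠ 0 := by
    rw [SimpleGraph.dist_ne_zero_iff_ne_and_reachable]
    exact ⟨by decide, ⟨c6walk02⟩⟩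
  have h1 : C6.dist 0 2 ≠ 1 := by
    rw [ne_eq, SimpleGraph.dist_eq_one_iff_adj, c6_adj_iff]
    decide
  omega

lemma c6_dist03 : C6.dist 0 3 = 3 := by
  have hle : C6.dist 0 3 ≤ 3 := by
    have := SimpleGraph.dist_le c6walk03
    simpa [c6walk03] using this
  have h0 : C6.dist 0 3 ≠ 0 := by
    rw [SimpleGraph.dist_ne_zero_iff_ne_and_reachable]
    exact ⟨by decide, ⟨c6walk03⟩⟩
  have h1 : C6.dist 0 3 ≠ 1 := by
    rw [ne_eq, SimpleGraph.dist_eq_one_iff_adj, c6_adj_iff]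
    decide
  have h2 : C6.dist 0 3 ≠ 2 := by
    intro h
    obtain ⟨p, hp⟩ := SimpleGraph.exists_walk_of_dist_ne_zero h0
    rw [h] at hp
    cases p with
    | cons ha q =>
      cases q with
      | nil => simp at hp
      | cons hb r =>
        cases r with
        | nil =>
          rw [c6_adj_iff] at ha hb
          rcases ha with rfl | rfl <;> rcases hb with hb | hb <;> revert hb <;> decide
        | cons hc s => simp at hp
  omega

/-- In `C₆`: the graph is vertex-transitive; every pure-GNN link representation
computed from constant features assigns the links `(0,2)` and `(0,3)` the same
value; yet `d(0,2) = 2 ≠ 3 = d(0,3)`, and the two links are not automorphic. -/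
theorem c6_pure_gnn_fails :
    (∀ a b : ZMod 6, ∃ σ : C6 ≃g C6, σ a = b) ∧
    (∀ (X Y Z : Type) (c : X) (agg : Multiset X → Y) (upd : X → Y → X)
        (g : X → X → Z) (L : ℕ),
      g (mp C6 (fun _ => c) agg upd L 0) (mp C6 (fun _ => c) agg upd L 2)
        = g (mp C6 (fun _ => c) agg upd L 0) (mp C6 (fun _ => c) agg upd L 3)) ∧
    C6.dist 0 2 = 2 ∧ C6.dist 0 3 = 3 ∧
    (¬ ∃ σ : C6 ≃g C6, (fun x => σ x) '' {(0 : ZMod 6), 2} = {(0 : ZMod 6), 3}) := by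
  refine ⟨?_, ?_, c6_dist02, c6_dist03, ?_⟩
  · intro a b
    refine ⟨⟨Equiv.addRight (b - a), ?_⟩, show a + (b - a) = b by ring⟩
    intro x y
    simp only [Equiv.coe_addRight, c6_adj_iff]
    have e1 : x + (b - a) - 1 = (x - 1) + (b - a) := by ring
    have e2 : x + (b - a) + 1 = (x + 1) + (b - a) := by ring
    rw [e1, e2, add_left_inj, add_left_inj]
  · intro X Y Z c agg upd g L
    rw [mp_const c agg upd L 2 3]
  · rintro ⟨σ, hσ⟩
    have h0 : σ 0 ∈ ({(0 : ZMod 6), 3} : Set (ZMod 6)) := by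
      rw [← hσ]; exact ⟨0, by simp⟩
    have h2 : σ 2 ∈ ({(0 : ZMod 6), 3} : Set (ZMod 6)) := by
      rw [← hσ]; exact ⟨2, by simp⟩
    have hne : σ 0 ≠ σ 2 := fun h =>
      (by decide : (0 : ZMod 6) ≠ 2) (σ.toEquiv.injective h)
    have hle : C6.dist (σ 0) (σ 2) ≤ 2 := by
      have := SimpleGraph.dist_le (c6walk02.map σ.toHom)
      simpa [c6walk02] using this
    simp only [Set.mem_insert_iff, Set.mem_singleton_iff] at h0 h2
    rcases h0 with h0 | h0 <;> rcases h2 with h2 | h2 <;>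
      first
        | (exact hne (h0.trans h2.symm))
        | (rw [h0, h2] at hle; rw [c6_dist03] at hle; omega)
        | (rw [h0, h2, SimpleGraph.dist_comm] at hle; rw [c6_dist03] at hle; omega)
end
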